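/- arXiv:2103.15932 — 6 statements merged into one kernel-verified Lean document; each statement's English description precedes it below -/
import Mathlib

section
/- For every δ ∈ (0,1] and T > 0, the unique solution a of the backward ODE a'(t) = -δ e^{-a(t)t}(1+t) on [0,T] with a(T) = 0 satisfies a(0) ≤ C δ^{1/3}, where C is a constant independent of δ and T. -/
open Real

/-- For every δ ∈ (0,1] and T > 0, any solution of the backward ODE
`a'(t) = -δ e^{-a(t)t}(1+t)` on `[0,T]` with `a(T) = 0` satisfies
`a 0 ≤ C δ^(1/3)` with `C` independent of `δ` and `T`. -/
theorem stmt0 :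
    ∃ C : ℝ, 0 < C ∧ ∀ (δ T : ℝ) (a : ℝ → ℝ),
      0 < δ → δ ≤ 1 → 0 < T →
      (∀ t ∈ Set.Icc (0:ℝ) T,
        HasDerivAt a (-δ * Real.exp (-(a t) * t) * (1 + t)) t) →
      a T = 0 →
      a 0 ≤ C * δ ^ ((1:ℝ)/3) := by
  refine ⟨3, by norm_num, ?_⟩
  intro δ T a hδ hδ1 hT hderiv haT
  have hδ13 : (0:ℝ) ≤ δ ^ ((1:ℝ)/3) := Real.rpow_nonneg hδ.le _
  set A := a 0 with hA
  rcases le_or_gt A 0 with h0 | hApos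
  · calc a 0 ≤ 0 := h0
      _ ≤ 3 * δ ^ ((1:ℝ)/3) := by positivity
  -- continuity of a on [0,T]
  have hcont : ContinuousOn a (Set.Icc 0 T) := fun t ht =>
    (hderiv t ht).continuousAt.continuousWithinAt
  -- a is strictly decreasing on [0,T]
  have hanti : StrictAntiOn a (Set.Icc 0 T) := by
    apply strictAntiOn_of_deriv_neg (convex_Icc 0 T) hcont
    intro x hx
    rw [interior_Icc] at hx
    rw [(hderiv x ⟨hx.1.le, hx.2.le⟩).deriv]
    have h1x : 0 < 1 + x := by linarith [hx.1]
    nlinarith [mul_pos (mul_pos hδ (Real.exp_pos (-(a x) * x))) h1x]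
  set k : ℝ := A / 2 with hkdef
  have hk : 0 < k := by positivity
  -- find τ with a τ = A/2
  have hmem : k ∈ Set.Icc (a T) (a 0) := by
    rw [haT]; exact ⟨hk.le, by simp only [hkdef, ← hA]; linarith⟩
  obtain ⟨τ, hτ, haτ⟩ := intermediate_value_Icc' hT.le hcont hmem
  have hτ0 : 0 ≤ τ := hτ.1
  have hsub : Set.Icc (0:ℝ) τ ⊆ Set.Icc 0 T := Set.Icc_subset_Icc le_rfl hτ.2
  -- a ≥ k on [0, τ]
  have hage : ∀ s ∈ Set.Icc (0:ℝ) τ, k ≤ a s := by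
    intro s hs
    rcases eq_or_lt_of_le hs.2 with h | h
    · rw [h, haτ]
    · exact haτ ▸ (hanti (hsub hs) hτ h).le
  -- comparison function G
  set G : ℝ → ℝ := fun s => δ * Real.exp (-k * s) * ((1 + s) / k + 1 / k ^ 2) with hGdef
  have hG : ∀ s, HasDerivAt G (-δ * Real.exp (-k * s) * (1 + s)) s := by
    intro s
    have h1 : HasDerivAt (fun s : ℝ => -k * s) (-k) s := by
      simpa using (hasDerivAt_id s).const_mul (-k)
    have h2 : HasDerivAt (fun s : ℝ => Real.exp (-k * s)) (Real.exp (-k * s) * (-k)) s :=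
      h1.exp
    have h3 : HasDerivAt (fun s : ℝ => (1 + s) / k + 1 / k ^ 2) (1 / k) s := by
      have : HasDerivAt (fun s : ℝ => (1 + s) / k + 1 / k ^ 2) ((0 + 1) / k + 0) s := by
        exact (((hasDerivAt_const s (1:ℝ)).add (hasDerivAt_id s)).div_const k).add
          (hasDerivAt_const s (1 / k ^ 2))
      simpa using this
    have h4 := (h2.mul h3).const_mul δ
    have h5 : HasDerivAt G
        (δ * (Real.exp (-k * s) * -k * ((1 + s) / k + 1 / k ^ 2)
          + Real.exp (-k * s) * (1 / k))) s := by
      simpa [hGdef, mul_assoc] using h4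
    convert h5 using 1
    have hk0 : k ≠ 0 := hk.ne'
    field_simp
    ring
  -- a - G is monotone on [0, τ]
  have hmono : MonotoneOn (fun s => a s - G s) (Set.Icc 0 τ) := by
    apply monotoneOn_of_deriv_nonneg (convex_Icc 0 τ)
    · exact (hcont.mono hsub).sub (fun s _ => (hG s).continuousAt.continuousWithinAt)
    · intro s hs
      rw [interior_Icc] at hs
      exact (((hderiv s (hsub ⟨hs.1.le, hs.2.le⟩)).sub (hG s)).differentiableAt).differentiableWithinAt
    · intro s hs
      rw [interior_Icc] at hs
      have hsmem : s ∈ Set.Icc (0:ℝ) τ := ⟨hs.1.le, hs.2.le⟩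
      rw [HasDerivAt.deriv (f := fun s => a s - G s) ((hderiv s (hsub hsmem)).sub (hG s))]
      have hexp : Real.exp (-(a s) * s) ≤ Real.exp (-k * s) := by
        apply Real.exp_le_exp.mpr
        have := mul_le_mul_of_nonneg_right (hage s hsmem) hs.1.le
        nlinarith
      have h1s : (0:ℝ) ≤ 1 + s := by linarith [hs.1]
      nlinarith [mul_le_mul_of_nonneg_left (mul_le_mul_of_nonneg_right hexp h1s) hδ.le]
  -- conclude A/2 ≤ G 0
  have hle := hmono (Set.left_mem_Icc.mpr hτ0) (Set.right_mem_Icc.mpr hτ0) hτ0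
  have hGτ : 0 ≤ G τ := by
    have h1τ : (0:ℝ) ≤ 1 + τ := by linarith
    have := Real.exp_pos (-k * τ)
    positivity
  have hG0 : G 0 = δ * (1 / k + 1 / k ^ 2) := by
    simp [hGdef]
  have hkey : A / 2 ≤ δ * (1 / k + 1 / k ^ 2) := by
    rw [← hG0]
    have : a 0 - G 0 ≤ a τ - G τ := hle
    rw [haτ] at this
    simp only [← hA] at this
    linarith [hGτ]
  -- algebra: A^3 ≤ 4δA + 8δ
  have hkA : k = A / 2 := rfl
  have hcube : A ^ 3 ≤ 4 * δ * A + 8 * δ := by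
    rw [hkA] at hkey
    have hA0 : A ≠ 0 := hApos.ne'
    have hmul := mul_le_mul_of_nonneg_right hkey (by positivity : (0:ℝ) ≤ A ^ 2)
    have hrw : δ * (1 / (A / 2) + 1 / (A / 2) ^ 2) * A ^ 2 = 2 * δ * A + 4 * δ := by
      field_simp
      ring
    rw [hrw] at hmul
    nlinarith [hmul]
  have hA4 : A ≤ 4 := by
    by_contra hgt
    push_neg at hgt
    nlinarith [hcube, mul_pos (by linarith : (0:ℝ) < A - 4)
      (by nlinarith : (0:ℝ) < A ^ 2 + 4 * A + 12),
      mul_le_mul_of_nonneg_right hδ1 hApos.le]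
  have hcube2 : A ^ 3 ≤ 24 * δ := by
    nlinarith [mul_le_mul_of_nonneg_left hA4 hδ.le]
  -- take cube roots
  have h1 : A ≤ (24 * δ) ^ ((1:ℝ)/3) := by
    have h2 := Real.rpow_le_rpow (by positivity : (0:ℝ) ≤ A ^ 3) hcube2
      (by norm_num : (0:ℝ) ≤ 1/3)
    have h3 : (A ^ 3 : ℝ) ^ ((1:ℝ)/3) = A := by
      rw [← Real.rpow_natCast A 3, ← Real.rpow_mul hApos.le]
      norm_num
    rwa [h3] at h2
  have h4 : (24 * δ) ^ ((1:ℝ)/3) = (24:ℝ) ^ ((1:ℝ)/3) * δ ^ ((1:ℝ)/3) :=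
    Real.mul_rpow (by norm_num) hδ.le
  have h5 : (24:ℝ) ^ ((1:ℝ)/3) ≤ 3 := by
    have : (24:ℝ) ^ ((1:ℝ)/3) ≤ (27:ℝ) ^ ((1:ℝ)/3) :=
      Real.rpow_le_rpow (by norm_num) (by norm_num) (by norm_num)
    have h27 : (27:ℝ) ^ ((1:ℝ)/3) = 3 := by
      rw [show (27:ℝ) = 3 ^ (3:ℕ) by norm_num, ← Real.rpow_natCast 3 3,
        ← Real.rpow_mul (by norm_num : (0:ℝ) ≤ 3)]
      norm_num
    linarith
  calc a 0 = A := hA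
    _ ≤ (24 * δ) ^ ((1:ℝ)/3) := h1
    _ = (24:ℝ) ^ ((1:ℝ)/3) * δ ^ ((1:ℝ)/3) := h4
    _ ≤ 3 * δ ^ ((1:ℝ)/3) := by
        exact mul_le_mul_of_nonneg_right h5 hδ13
end

section
/- Let a be decreasing and positive on [0,t̄] with a'(s) = -δ e^{-a(s)s}(1+s). Then a(0) ≤ a(t̄) + δ/a(t̄) + δ/a(t̄)². -/
open Real

/-- If `a` is positive and decreasing on `[0,t̄]` and solves
`a'(s) = -δ e^{-a(s)s}(1+s)` there, then
`a 0 ≤ a t̄ + δ/(a t̄) + δ/(a t̄)^2`. -/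
theorem stmt1 (δ tbar : ℝ) (a : ℝ → ℝ)
    (hδ : 0 < δ) (htbar : 0 < tbar)
    (hpos : ∀ s ∈ Set.Icc (0:ℝ) tbar, 0 < a s)
    (hanti : AntitoneOn a (Set.Icc (0:ℝ) tbar))
    (hderiv : ∀ s ∈ Set.Icc (0:ℝ) tbar,
      HasDerivAt a (-δ * Real.exp (-(a s) * s) * (1 + s)) s) :
    a 0 ≤ a tbar + δ / a tbar + δ / (a tbar) ^ 2 := by
  set b := a tbar with hb
  have htmem : tbar ∈ Set.Icc (0:ℝ) tbar := ⟨le_of_lt htbar, le_refl _⟩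
  have h0mem : (0:ℝ) ∈ Set.Icc (0:ℝ) tbar := ⟨le_refl _, le_of_lt htbar⟩
  have hbpos : 0 < b := hpos tbar htmem
  -- antiderivative F(s) = -(1/b) e^{-bs}(1+s) - (1/b^2) e^{-bs}
  set F : ℝ → ℝ := fun s => -(1/b) * Real.exp (-b*s) * (1+s) - (1/b^2) * Real.exp (-b*s) with hF
  have hFderiv : ∀ s : ℝ, HasDerivAt F (Real.exp (-b*s) * (1+s)) s := by
    intro s
    have he : HasDerivAt (fun s : ℝ => Real.exp (-b*s)) (-b * Real.exp (-b*s)) s := by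
      have : HasDerivAt (fun s : ℝ => -b*s) (-b) s := by
        simpa using (hasDerivAt_id s).const_mul (-b)
      simpa [mul_comm] using this.exp
    have h1 : HasDerivAt (fun s : ℝ => -(1/b) * Real.exp (-b*s) * (1+s))
        ((-(1/b) * (-b * Real.exp (-b*s))) * (1+s) + (-(1/b) * Real.exp (-b*s)) * 1) s := by
      exact ((he.const_mul (-(1/b))).mul ((hasDerivAt_id s).const_add 1))
    have h2 : HasDerivAt (fun s : ℝ => (1/b^2) * Real.exp (-b*s))
        ((1/b^2) * (-b * Real.exp (-b*s))) s := he.const_mul _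
    have := h1.sub h2
    refine (this : HasDerivAt F _ s).congr_deriv ?_
    have hb0 : b ≠ 0 := hbpos.ne'
    field_simp
    ring
  set g : ℝ → ℝ := fun s => a s + δ * F s with hg
  have hgderiv : ∀ s ∈ Set.Icc (0:ℝ) tbar,
      HasDerivAt g (-δ * Real.exp (-(a s) * s) * (1 + s) + δ * (Real.exp (-b*s) * (1+s))) s :=
    fun s hs => (hderiv s hs).add ((hFderiv s).const_mul δ)
  have hgmono : MonotoneOn g (Set.Icc (0:ℝ) tbar) := by
    apply monotoneOn_of_deriv_nonneg (convex_Icc 0 tbar)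
    · exact fun s hs => ((hgderiv s hs).continuousAt).continuousWithinAt
    · intro s hs
      rw [interior_Icc] at hs
      exact ((hgderiv s ⟨le_of_lt hs.1, le_of_lt hs.2⟩).differentiableAt).differentiableWithinAt
    · intro s hs
      rw [interior_Icc] at hs
      have hsmem : s ∈ Set.Icc (0:ℝ) tbar := ⟨le_of_lt hs.1, le_of_lt hs.2⟩
      rw [(hgderiv s hsmem).deriv]
      have hab : b ≤ a s := hanti hsmem htmem hs.2.le
      have hexp : Real.exp (-(a s) * s) ≤ Real.exp (-b*s) := by
        apply Real.exp_le_exp.mpr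
        nlinarith [hs.1.le]
      have h1s : (0:ℝ) ≤ 1 + s := by linarith [hs.1.le]
      nlinarith [mul_nonneg (mul_nonneg hδ.le h1s) (sub_nonneg.mpr hexp)]
  have hle : g 0 ≤ g tbar := hgmono h0mem htmem (le_of_lt htbar)
  have hF0 : F 0 = -(1/b) - 1/b^2 := by simp [hF]
  have hFt : F tbar ≤ 0 := by
    have h1 : (0:ℝ) < Real.exp (-b*tbar) := Real.exp_pos _
    have : 0 < 1 + tbar := by linarith
    simp only [hF]
    nlinarith [mul_pos (mul_pos (one_div_pos.mpr hbpos) h1) this, mul_pos (one_div_pos.mpr (pow_pos hbpos 2)) h1]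
  simp only [hg, hF0] at hle
  have h3 : δ * (-(1/b) - 1/b^2) = -(δ/b) - δ/b^2 := by field_simp
  rw [h3] at hle
  have h4 : δ * F tbar ≤ 0 := mul_nonpos_of_nonneg_of_nonpos hδ.le hFt
  rw [hb] at hle
  show a 0 ≤ a tbar + δ / a tbar + δ / (a tbar) ^ 2
  clear_value g F b
  linarith only [hle, h4]
end

section
/- For every b > 0 there exists b₀ > 0 such that the forward solution a of a'(t) = -δ e^{-t a(t)}(1+t) with a(0) = b₀ exists for all t ≥ 0 and satisfies a(t) ≥ b for all t ≥ 0. In particular b₀ = b + δ(1/b + 1/b²) + 1 works. -/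
open Real

/-- For every `b > 0` there is `b₀ > 0` (indeed `b₀ = b + δ(1/b + 1/b²) + 1`)
such that any global forward solution of `a'(t) = -δ e^{-t a(t)}(1+t)` with
`a 0 = b₀` stays above `b` for all `t ≥ 0`. -/
theorem stmt3 (δ b : ℝ) (hδ : 0 < δ) (hb : 0 < b) :
    ∃ b₀ : ℝ, 0 < b₀ ∧ b₀ = b + δ * (1 / b + 1 / b ^ 2) + 1 ∧
      ∀ a : ℝ → ℝ, a 0 = b₀ →
        (∀ t : ℝ, 0 ≤ t →
          HasDerivAt a (-δ * Real.exp (-(t * a t)) * (1 + t)) t) →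
        ∀ t : ℝ, 0 ≤ t → b ≤ a t := by
  refine ⟨b + δ * (1 / b + 1 / b ^ 2) + 1, by positivity, rfl, ?_⟩
  intro a ha0 hderiv
  by_contra hcon
  push_neg at hcon
  obtain ⟨t₁, ht₁, ht₁b⟩ := hcon
  set S : Set ℝ := {t | 0 ≤ t ∧ a t ≤ b} with hS
  have hSne : S.Nonempty := ⟨t₁, ht₁, ht₁b.le⟩
  have hbdd : BddBelow S := ⟨0, fun x hx => hx.1⟩
  have hcontA : ContinuousOn a (Set.Ici 0) := fun t ht =>
    ((hderiv t ht).continuousAt).continuousWithinAt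
  have hSclosed : IsClosed S := by
    have hEq : S = Set.Ici 0 ∩ a ⁻¹' Set.Iic b := by
      ext t; simp [hS, Set.mem_Ici, Set.mem_Iic]
    rw [hEq]
    exact hcontA.preimage_isClosed_of_isClosed isClosed_Ici isClosed_Iic
  set T := sInf S with hT
  have hTS : T ∈ S := hSclosed.csInf_mem hSne hbdd
  have hpos : 0 < δ * (1 / b + 1 / b ^ 2) := by positivity
  have hT0 : 0 < T := by
    rcases hTS.1.lt_or_eq with h | h
    · exact h
    · exfalso
      have : a T = b + δ * (1 / b + 1 / b ^ 2) + 1 := by rw [← h, ha0]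
      linarith [hTS.2]
  have hgt : ∀ t, 0 ≤ t → t < T → b < a t := by
    intro t h0 hlt
    by_contra h
    push_neg at h
    exact absurd (csInf_le hbdd ⟨h0, h⟩) (not_le.mpr hlt)
  -- auxiliary function φ with φ' = -e^{-bt}(1+t)
  set φ : ℝ → ℝ := fun t => Real.exp (-(b * t)) * ((1 + t) / b + 1 / b ^ 2) with hφ
  have hφderiv : ∀ t : ℝ, HasDerivAt φ (-(Real.exp (-(b * t)) * (1 + t))) t := by
    intro t
    have h1 : HasDerivAt (fun t : ℝ => -(b * t)) (-b) t := by
      simpa using ((hasDerivAt_id t).const_mul b).fun_neg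
    have h2 : HasDerivAt (fun t : ℝ => Real.exp (-(b * t)))
        (Real.exp (-(b * t)) * (-b)) t := h1.exp
    have h3 : HasDerivAt (fun t : ℝ => (1 + t) / b + 1 / b ^ 2) (1 / b) t := by
      have : HasDerivAt (fun t : ℝ => (1 + t) / b) (1 / b) t := by
        simpa using (((hasDerivAt_id t).const_add 1).div_const b)
      convert this.add_const (1 / b ^ 2) using 2
    have h4 := h2.fun_mul h3
    refine h4.congr_deriv ?_
    field_simp
    ring
  set g : ℝ → ℝ := fun t => a t - δ * φ t with hg
  have hgderiv : ∀ t : ℝ, 0 ≤ t → HasDerivAt g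
      (-δ * Real.exp (-(t * a t)) * (1 + t) + δ * (Real.exp (-(b * t)) * (1 + t))) t := by
    intro t ht
    have := (hderiv t ht).fun_sub ((hφderiv t).const_mul δ)
    refine this.congr_deriv ?_
    ring
  have hmono : MonotoneOn g (Set.Icc 0 T) := by
    apply monotoneOn_of_deriv_nonneg (convex_Icc 0 T)
    · exact fun t ht => ((hgderiv t ht.1).continuousAt).continuousWithinAt
    · intro t ht
      rw [interior_Icc] at ht
      exact ((hgderiv t ht.1.le).differentiableAt).differentiableWithinAt
    · intro t ht
      rw [interior_Icc] at ht
      rw [(hgderiv t ht.1.le).deriv]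
      have hab : b ≤ a t := (hgt t ht.1.le ht.2).le
      have hexp : Real.exp (-(t * a t)) ≤ Real.exp (-(b * t)) := by
        apply Real.exp_le_exp.mpr
        nlinarith [ht.1.le]
      have h1t : (0:ℝ) ≤ 1 + t := by linarith [ht.1.le]
      nlinarith [mul_nonneg (mul_nonneg hδ.le h1t) (sub_nonneg.2 hexp)]
  have key : g 0 ≤ g T := hmono ⟨le_refl 0, hTS.1⟩ ⟨hTS.1, le_refl T⟩ hTS.1
  have hφ0 : φ 0 = 1 / b + 1 / b ^ 2 := by
    simp [hφ]
  have hφT : 0 ≤ φ T := by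
    have : (0:ℝ) ≤ (1 + T) / b + 1 / b ^ 2 := by positivity
    exact mul_nonneg (Real.exp_pos _).le this
  have hg0 : g 0 = b + 1 := by
    simp only [hg, ha0, hφ0]
    ring
  have hgT : g T ≤ a T := by
    have : 0 ≤ δ * φ T := mul_nonneg hδ.le hφT
    simp only [hg]; linarith
  linarith [hTS.2]
end

section
/- Suppose ω : S¹ × ℝ → ℝ satisfies 0 ≤ ω(x,v) ≤ M/(1+v²)² and let ω₀(v) = ∫_{S¹} ω(x,v) dx with Fourier-in-v transform ω̃₀. If λ > π√M, then for j_λ(t) = -e^{-λ t} j_{-1}(t) with j_{-1}(t) = -(i/2) ω̃₀'(-t), one has |L[j_λ](σ)| ≤ π² M/λ² < 1 for all Re σ ≥ 0; in particular L[j_λ](σ) ≠ -1. -/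
open MeasureTheory Real Complex FourierTransform

/-- If `0 ≤ ω(x,v) ≤ M/(1+v²)²` on `S¹ × ℝ` (with `S¹` parametrized by
`[0,2π]`), `ω₀(v) = ∫_{S¹} ω(x,v) dx`, and `ω̃₀` is the (normalized)
Fourier transform in `v`, then for `λ > π √M` the kernel
`j_λ(t) = -e^{-λt} j_{-1}(t)` with `j_{-1}(t) = -(i/2) ω̃₀'(-t)` (where
`ω̃₀'` is the transform of `ω₀'`) has Laplace transform bounded by
`π² M / λ² < 1` on `{Re σ ≥ 0}`; in particular `L[j_λ](σ) ≠ -1`. -/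
theorem stmt7 (M lam : ℝ) (ω : ℝ → ℝ → ℝ)
    (hM : 0 < M)
    (hlam : Real.pi * Real.sqrt M < lam)
    (hωmeas : Measurable (Function.uncurry ω))
    (hω : ∀ x v : ℝ, 0 ≤ ω x v ∧ ω x v ≤ M / (1 + v ^ 2) ^ 2)
    (ω₀ : ℝ → ℝ)
    (hω₀ : ω₀ = fun v => ∫ x in (0:ℝ)..(2 * Real.pi), ω x v)
    (hω₀diff : Differentiable ℝ ω₀)
    (hω₀int : Integrable ω₀)
    (hω₀'int : Integrable (deriv ω₀))
    (hω₀top : Filter.Tendsto ω₀ Filter.atTop (nhds 0))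
    (hω₀bot : Filter.Tendsto ω₀ Filter.atBot (nhds 0))
    (tilde' : ℝ → ℂ)
    (htilde' : tilde' = fun (ξ : ℝ) =>
      (1 / (2 * Real.pi)) * ∫ v : ℝ, Complex.exp (-Complex.I * v * (ξ:ℂ)) * deriv ω₀ v)
    (jneg1 jlam : ℝ → ℂ)
    (hjneg1 : jneg1 = fun t => -(Complex.I / 2) * tilde' (-t))
    (hjlam : jlam = fun t => -Real.exp (-lam * t) * jneg1 t) :
    ∀ σ : ℂ, 0 ≤ σ.re →
      ‖∫ t in Set.Ici (0:ℝ), Complex.exp (-σ * t) * jlam t‖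
          ≤ Real.pi ^ 2 * M / lam ^ 2 ∧
      Real.pi ^ 2 * M / lam ^ 2 < 1 ∧
      (∫ t in Set.Ici (0:ℝ), Complex.exp (-σ * t) * jlam t) ≠ -1 := by
  have hlam0 : 0 < lam := lt_of_le_of_lt (by positivity) hlam
  -- bounds on ω₀
  have hb : ∀ v : ℝ, (0:ℝ) < 1 + v ^ 2 := fun v => by positivity
  have hωv_int : ∀ v : ℝ, IntervalIntegrable (fun x => ω x v) volume 0 (2 * Real.pi) := by
    intro v
    rw [intervalIntegrable_iff]
    refine Integrable.mono' (g := fun _ => M / (1 + v ^ 2) ^ 2)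
      (integrableOn_const measure_Ioc_lt_top.ne)
      ((hωmeas.comp (measurable_id.prodMk measurable_const)).aestronglyMeasurable.restrict)
      (Filter.Eventually.of_forall fun x => ?_)
    rw [Real.norm_eq_abs, _root_.abs_of_nonneg (hω x v).1]
    exact (hω x v).2
  have hω₀nonneg : ∀ v : ℝ, 0 ≤ ω₀ v := by
    intro v; rw [hω₀]
    exact intervalIntegral.integral_nonneg (by positivity) fun x _ => (hω x v).1
  have hω₀le : ∀ v : ℝ, ω₀ v ≤ 2 * Real.pi * M * (1 + v ^ 2)⁻¹ := by
    intro v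
    have h1 : ω₀ v ≤ ∫ x in (0:ℝ)..(2 * Real.pi), M / (1 + v ^ 2) ^ 2 := by
      rw [hω₀]
      exact intervalIntegral.integral_mono_on (by positivity) (hωv_int v)
        intervalIntegrable_const fun x _ => (hω x v).2
    rw [intervalIntegral.integral_const, sub_zero, smul_eq_mul] at h1
    refine h1.trans ?_
    calc 2 * Real.pi * (M / (1 + v ^ 2) ^ 2)
        ≤ 2 * Real.pi * (M / (1 + v ^ 2)) := by
          gcongr
          nlinarith [sq_nonneg v, sq_nonneg (v ^ 2)]
      _ = 2 * Real.pi * M * (1 + v ^ 2)⁻¹ := by rw [div_eq_mul_inv]; ring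
  -- integral of ω₀ bounded
  have hintbound : Integrable (fun v : ℝ => 2 * Real.pi * M * (1 + v ^ 2)⁻¹) :=
    integrable_inv_one_add_sq.const_mul _
  have hω₀intle : ∫ v : ℝ, ω₀ v ≤ 2 * Real.pi ^ 2 * M := by
    have := integral_mono hω₀int hintbound hω₀le
    rwa [integral_const_mul, integral_univ_inv_one_add_sq, show 2 * Real.pi * M * Real.pi
      = 2 * Real.pi ^ 2 * M by ring] at this
  -- Fourier setup
  set F : ℝ → ℂ := fun v => ((ω₀ v : ℝ) : ℂ) with hF
  have hFint : Integrable F := hω₀int.ofReal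
  have hFderiv : ∀ v : ℝ, HasDerivAt F ((deriv ω₀ v : ℝ) : ℂ) v := fun v =>
    ((hω₀diff v).hasDerivAt).ofReal_comp
  have hFdiff : Differentiable ℝ F := fun v => (hFderiv v).differentiableAt
  have hderivF : deriv F = fun v => ((deriv ω₀ v : ℝ) : ℂ) := funext fun v => (hFderiv v).deriv
  have hF'int : Integrable (deriv F) := by rw [hderivF]; exact hω₀'int.ofReal
  have hfour : ∀ x : ℝ, 𝓕 (deriv F) x = (2 * Real.pi * Complex.I * x) • 𝓕 F x := fun x => by
    rw [Real.fourier_deriv hFint hFdiff hF'int]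
  have hFnorm : ∀ w : ℝ, ‖𝓕 F w‖ ≤ 2 * Real.pi ^ 2 * M := by
    intro w
    refine (VectorFourier.norm_fourierIntegral_le_integral_norm _ _ _ _ _).trans ?_
    calc ∫ v : ℝ, ‖F v‖ = ∫ v : ℝ, ω₀ v := by
          refine integral_congr_ae (Filter.Eventually.of_forall fun v => ?_)
          simp [hF, Complex.norm_real, _root_.abs_of_nonneg (hω₀nonneg v)]
      _ ≤ 2 * Real.pi ^ 2 * M := hω₀intle
  -- identify tilde' with Fourier integral of deriv F
  have hident : ∀ ξ : ℝ, (∫ v : ℝ, Complex.exp (-Complex.I * v * (ξ:ℂ)) * deriv ω₀ v)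
      = 𝓕 (deriv F) (ξ / (2 * Real.pi)) := by
    intro ξ
    rw [Real.fourier_real_eq_integral_exp_smul]
    refine integral_congr_ae (Filter.Eventually.of_forall fun v => ?_)
    rw [hderivF]
    simp only [RCLike.inner_apply, conj_trivial, smul_eq_mul]
    congr 1
    have hre : -2 * Real.pi * v * (ξ / (2 * Real.pi)) = -(v * ξ) := by
      field_simp
    rw [hre]
    push_cast
    ring
  have htnorm : ∀ ξ : ℝ, ‖tilde' ξ‖ ≤ Real.pi * M * |ξ| := by
    intro ξ
    rw [htilde']
    simp only
    rw [hident ξ, hfour, smul_eq_mul, norm_mul, norm_mul]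
    have h1 : ‖(1 / (2 * (Real.pi : ℂ)))‖ = 1 / (2 * Real.pi) := by
      rw [norm_div, norm_one, norm_mul]
      have : ‖(2 : ℂ)‖ = 2 := by norm_num
      rw [this, Complex.norm_real, Real.norm_eq_abs, _root_.abs_of_nonneg Real.pi_pos.le]
    have h2 : ‖(2 * (Real.pi:ℂ) * Complex.I * ((ξ / (2 * Real.pi) : ℝ) : ℂ))‖ = |ξ| := by
      simp only [norm_mul, Complex.norm_I, mul_one, Complex.norm_real, Real.norm_eq_abs]
      have : ‖(2 : ℂ)‖ = 2 := by norm_num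
      rw [this, _root_.abs_of_nonneg Real.pi_pos.le, abs_div,
        _root_.abs_of_nonneg (by positivity : (0:ℝ) ≤ 2 * Real.pi)]
      field_simp
    rw [h1, h2]
    calc 1 / (2 * Real.pi) * (|ξ| * ‖𝓕 F (ξ / (2 * Real.pi))‖)
        ≤ 1 / (2 * Real.pi) * (|ξ| * (2 * Real.pi ^ 2 * M)) := by
          have h3 := hFnorm (ξ / (2 * Real.pi))
          gcongr
      _ = Real.pi * M * |ξ| := by field_simp
  -- Laplace bound
  intro σ hσ
  have hbound_int : IntegrableOn
      (fun t : ℝ => Real.pi * M / 2 * (t * Real.exp (-lam * t))) (Set.Ici 0) := by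
    rw [integrableOn_Ici_iff_integrableOn_Ioi]
    have base := integrableOn_rpow_mul_exp_neg_mul_rpow
      (by norm_num : (-1:ℝ) < 1) (by norm_num : (0:ℝ) < 1) hlam0
    have h2 : IntegrableOn (fun t : ℝ => t * Real.exp (-lam * t)) (Set.Ioi 0) :=
      base.congr_fun (fun t ht => by simp [Real.rpow_one]) measurableSet_Ioi
    exact h2.const_mul _
  have hval : ∫ t in Set.Ici (0:ℝ), Real.pi * M / 2 * (t * Real.exp (-lam * t))
      = Real.pi * M / 2 * (1 / lam ^ 2) := by
    rw [MeasureTheory.integral_Ici_eq_integral_Ioi, integral_const_mul]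
    congr 1
    have h2 := integral_rpow_mul_exp_neg_mul_Ioi (by norm_num : (0:ℝ) < 2) hlam0
    rw [show (2:ℝ) - 1 = 1 by norm_num] at h2
    have h3 : ∫ t in Set.Ioi (0:ℝ), t * Real.exp (-lam * t)
        = ∫ t in Set.Ioi (0:ℝ), t ^ (1:ℝ) * Real.exp (-(lam * t)) := by
      refine setIntegral_congr_fun measurableSet_Ioi fun t ht => ?_
      rw [Real.rpow_one, neg_mul]
    rw [h3, h2, Real.Gamma_two, mul_one,
      show ((2:ℝ)) = ((2:ℕ):ℝ) by norm_num, Real.rpow_natCast, div_pow, one_pow]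
  have hptws : ∀ t ∈ Set.Ici (0:ℝ),
      ‖Complex.exp (-σ * t) * jlam t‖ ≤ Real.pi * M / 2 * (t * Real.exp (-lam * t)) := by
    intro t ht
    have ht0 : (0:ℝ) ≤ t := ht
    rw [hjlam, hjneg1]
    simp only
    simp only [norm_mul, norm_neg]
    have he1 : ‖Complex.exp (-σ * t)‖ ≤ 1 := by
      rw [Complex.norm_exp]
      refine Real.exp_le_one_iff.2 ?_
      simp only [neg_mul, Complex.neg_re, Complex.mul_re, Complex.ofReal_re,
        Complex.ofReal_im, mul_zero, sub_zero]
      nlinarith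
    have he2 : ‖((Real.exp (-lam * t) : ℝ) : ℂ)‖ = Real.exp (-lam * t) := by
      rw [Complex.norm_real, Real.norm_eq_abs, _root_.abs_of_pos (Real.exp_pos _)]
    have he3 : ‖(Complex.I / 2)‖ = 1 / 2 := by
      simp [map_div₀]
    have he4 : ‖tilde' (-t)‖ ≤ Real.pi * M * t := by
      have := htnorm (-t)
      rwa [abs_neg, _root_.abs_of_nonneg ht0] at this
    calc ‖Complex.exp (-σ * t)‖ * (‖((Real.exp (-lam * t) : ℝ) : ℂ)‖ *
          (‖(Complex.I / 2)‖ * ‖tilde' (-t)‖))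
        ≤ 1 * (Real.exp (-lam * t) * (1 / 2 * (Real.pi * M * t))) := by
          rw [he2, he3]
          gcongr
      _ = Real.pi * M / 2 * (t * Real.exp (-lam * t)) := by ring
  have hnormle : ‖∫ t in Set.Ici (0:ℝ), Complex.exp (-σ * t) * jlam t‖
      ≤ Real.pi * M / 2 * (1 / lam ^ 2) := by
    rw [← hval]
    refine norm_integral_le_of_norm_le hbound_int ?_
    exact (ae_restrict_iff' measurableSet_Ici).2 (Filter.Eventually.of_forall hptws)
  have hle2 : Real.pi * M / 2 * (1 / lam ^ 2) ≤ Real.pi ^ 2 * M / lam ^ 2 := by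
    rw [show Real.pi * M / 2 * (1 / lam ^ 2) = (Real.pi * M / 2) / lam ^ 2 by ring]
    have hpi := Real.pi_gt_three
    gcongr
    nlinarith [mul_pos Real.pi_pos hM,
      mul_lt_mul_of_pos_right Real.pi_gt_three (mul_pos Real.pi_pos hM)]
  have hmain : ‖∫ t in Set.Ici (0:ℝ), Complex.exp (-σ * t) * jlam t‖
      ≤ Real.pi ^ 2 * M / lam ^ 2 := hnormle.trans hle2
  have hlt : Real.pi ^ 2 * M / lam ^ 2 < 1 := by
    rw [div_lt_one (by positivity)]
    have h0 : (0:ℝ) ≤ Real.pi * Real.sqrt M := by positivity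
    have hs := Real.sq_sqrt hM.le
    nlinarith [mul_self_lt_mul_self h0 hlam]
  refine ⟨hmain, hlt, fun heq => ?_⟩
  rw [heq] at hmain
  rw [norm_neg, norm_one] at hmain
  linarith
end

section
/- For β > 2, the function Ω_β(ν) = Z(β,ν)^{-1} ∫_{S¹×ℝ} e^{-β(v²/2 - ν cos x)} cos x dx dv, where Z(β,ν) = ∫_{S¹×ℝ} e^{-β(v²/2 - ν cos x)} dx dv, has a fixed point: there exists ν̄ > 0 with Ω_β(ν̄) = ν̄. -/
open MeasureTheory Real

/-- The partition function of the Gibbs state `e^{-β(v²/2 - ν cos x)}`. -/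
noncomputable def Zpart (β ν : ℝ) : ℝ :=
  ∫ x in (0:ℝ)..(2 * Real.pi), ∫ v : ℝ, Real.exp (-β * (v ^ 2 / 2 - ν * Real.cos x))

/-- The magnetization `Ω_β(ν)` of the Gibbs state. -/
noncomputable def Omega (β ν : ℝ) : ℝ :=
  (∫ x in (0:ℝ)..(2 * Real.pi),
      ∫ v : ℝ, Real.exp (-β * (v ^ 2 / 2 - ν * Real.cos x)) * Real.cos x) / Zpart β ν

noncomputable def Dfun (t : ℝ) : ℝ := ∫ x in (0:ℝ)..(2 * Real.pi), Real.exp (t * Real.cos x)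

noncomputable def Nfun (t : ℝ) : ℝ :=
  ∫ x in (0:ℝ)..(2 * Real.pi), Real.exp (t * Real.cos x) * Real.cos x

lemma inner_int (β ν c : ℝ) :
    (∫ v : ℝ, Real.exp (-β * (v ^ 2 / 2 - ν * c)))
      = Real.sqrt (π / (β / 2)) * Real.exp (β * ν * c) := by
  have h : ∀ v : ℝ, Real.exp (-β * (v ^ 2 / 2 - ν * c))
      = Real.exp (-(β / 2) * v ^ 2) * Real.exp (β * ν * c) := by
    intro v
    rw [← Real.exp_add]
    ring_nf
  simp only [h]
  rw [integral_mul_const, integral_gaussian]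

lemma omega_eq (β ν : ℝ) (hβ : 0 < β) :
    Omega β ν = Nfun (β * ν) / Dfun (β * ν) := by
  have hG : 0 < Real.sqrt (π / (β / 2)) :=
    Real.sqrt_pos.mpr (div_pos Real.pi_pos (by linarith))
  have hZ : Zpart β ν = Real.sqrt (π / (β / 2)) * Dfun (β * ν) := by
    unfold Zpart Dfun
    simp only [inner_int]
    rw [← intervalIntegral.integral_const_mul]
  have hN : (∫ x in (0:ℝ)..(2 * Real.pi),
      ∫ v : ℝ, Real.exp (-β * (v ^ 2 / 2 - ν * Real.cos x)) * Real.cos x)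
      = Real.sqrt (π / (β / 2)) * Nfun (β * ν) := by
    unfold Nfun
    have : ∀ x : ℝ, (∫ v : ℝ, Real.exp (-β * (v ^ 2 / 2 - ν * Real.cos x)) * Real.cos x)
        = Real.sqrt (π / (β / 2)) * (Real.exp (β * ν * Real.cos x) * Real.cos x) := by
      intro x
      rw [integral_mul_const, inner_int]
      ring
    simp only [this]
    rw [← intervalIntegral.integral_const_mul]
  unfold Omega
  rw [hZ, hN, mul_div_mul_left _ _ (ne_of_gt hG)]

lemma cont_D : Continuous Dfun :=
  intervalIntegral.continuous_parametric_intervalIntegral_of_continuous' (by fun_prop) 0 (2 * π)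

lemma cont_N : Continuous Nfun :=
  intervalIntegral.continuous_parametric_intervalIntegral_of_continuous' (by fun_prop) 0 (2 * π)

lemma D_pos (t : ℝ) : 0 < Dfun t := by
  apply intervalIntegral.intervalIntegral_pos_of_pos_on
  · exact (by fun_prop : Continuous fun x : ℝ => Real.exp (t * Real.cos x)).intervalIntegrable _ _
  · intro x _; exact Real.exp_pos _
  · positivity

lemma D_le (t : ℝ) (ht : 0 ≤ t) : Dfun t ≤ 2 * π * Real.exp t := by
  have : Dfun t ≤ ∫ _ in (0:ℝ)..(2 * Real.pi), Real.exp t := by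
    apply intervalIntegral.integral_mono_on (by positivity)
    · exact (by fun_prop : Continuous fun x : ℝ => Real.exp (t * Real.cos x)).intervalIntegrable _ _
    · exact intervalIntegrable_const
    · intro x _
      exact Real.exp_le_exp.mpr (by nlinarith [Real.cos_le_one x])
  simpa [mul_comm] using this

lemma N_lower (t : ℝ) (ht0 : 0 ≤ t) (ht1 : t ≤ 1) :
    Real.pi * t - 2 * Real.pi * t ^ 2 ≤ Nfun t := by
  have hsplit : Nfun t - (∫ x in (0:ℝ)..(2 * Real.pi), (1 + t * Real.cos x) * Real.cos x)
      = ∫ x in (0:ℝ)..(2 * Real.pi),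
          (Real.exp (t * Real.cos x) - 1 - t * Real.cos x) * Real.cos x := by
    unfold Nfun
    rw [← intervalIntegral.integral_sub
      ((by fun_prop : Continuous fun x : ℝ => Real.exp (t * Real.cos x) * Real.cos x).intervalIntegrable _ _)
      ((by fun_prop : Continuous fun x : ℝ => (1 + t * Real.cos x) * Real.cos x).intervalIntegrable _ _)]
    congr 1
    ext x
    ring
  have hmain : (∫ x in (0:ℝ)..(2 * Real.pi), (1 + t * Real.cos x) * Real.cos x)
      = Real.pi * t := by
    have : ∀ x : ℝ, (1 + t * Real.cos x) * Real.cos x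
        = Real.cos x + t * Real.cos x ^ 2 := by intro x; ring
    simp only [this]
    rw [intervalIntegral.integral_add ((by fun_prop : Continuous Real.cos).intervalIntegrable _ _)
      ((by fun_prop : Continuous fun x : ℝ => t * Real.cos x ^ 2).intervalIntegrable _ _),
      intervalIntegral.integral_const_mul, integral_cos, integral_cos_sq]
    simp [Real.sin_two_pi, Real.cos_two_pi]
    ring
  have hrem : |∫ x in (0:ℝ)..(2 * Real.pi),
      (Real.exp (t * Real.cos x) - 1 - t * Real.cos x) * Real.cos x| ≤ t ^ 2 * (2 * Real.pi) := by
    have := intervalIntegral.norm_integral_le_of_norm_le_const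
      (a := (0:ℝ)) (b := 2 * Real.pi) (C := t ^ 2)
      (f := fun x => (Real.exp (t * Real.cos x) - 1 - t * Real.cos x) * Real.cos x) ?_
    · simpa [Real.norm_eq_abs,
        abs_of_nonneg (by positivity : (0:ℝ) ≤ 2 * Real.pi)] using this
    · intro x _
      rw [Real.norm_eq_abs, abs_mul]
      have h1 : |t * Real.cos x| ≤ 1 := by
        rw [abs_mul, abs_of_nonneg ht0]
        nlinarith [Real.abs_cos_le_one x, abs_nonneg (Real.cos x)]
      have h2 := Real.abs_exp_sub_one_sub_id_le h1
      have hc2 : Real.cos x ^ 2 ≤ 1 := by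
        nlinarith [Real.neg_one_le_cos x, Real.cos_le_one x]
      have h3 : (t * Real.cos x) ^ 2 ≤ t ^ 2 := by
        rw [mul_pow]
        nlinarith [sq_nonneg t]
      calc |Real.exp (t * Real.cos x) - 1 - t * Real.cos x| * |Real.cos x|
          ≤ (t * Real.cos x) ^ 2 * 1 := by
            apply mul_le_mul h2 (Real.abs_cos_le_one x) (abs_nonneg _)
            positivity
        _ ≤ t ^ 2 := by nlinarith
  have := abs_le.mp hrem
  linarith [hsplit, hmain, this.1]

lemma D_le' (t : ℝ) (ht0 : 0 ≤ t) (ht1 : t < 1) : Dfun t ≤ 2 * π / (1 - t) := by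
  have h1t : (0:ℝ) < 1 - t := by linarith
  have he : Real.exp t ≤ 1 / (1 - t) := by
    rw [le_div_iff₀ h1t]
    have h : (1 - t) ≤ Real.exp (-t) := by linarith [Real.add_one_le_exp (-t)]
    have h2 := mul_le_mul_of_nonneg_right h (Real.exp_pos t).le
    rw [← Real.exp_add] at h2
    simp only [neg_add_cancel, Real.exp_zero] at h2
    linarith [h2, mul_comm (Real.exp t) (1 - t)]
  calc Dfun t ≤ 2 * π * Real.exp t := D_le t ht0
    _ ≤ 2 * π * (1 / (1 - t)) := by
        apply mul_le_mul_of_nonneg_left he (by positivity)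
    _ = 2 * π / (1 - t) := by ring

/-- For `β > 2` the magnetization map has a positive fixed point:
there is `ν̄ > 0` with `Ω_β(ν̄) = ν̄` (a nonhomogeneous BGK state). -/
theorem stmt8 (β : ℝ) (hβ : 2 < β) :
    ∃ ν : ℝ, 0 < ν ∧ Omega β ν = ν := by
  have hβ0 : 0 < β := by linarith
  set ν₀ : ℝ := (β - 2) / (4 * β ^ 2) with hν₀def
  have hν₀pos : 0 < ν₀ := div_pos (by linarith) (by positivity)
  set t₀ : ℝ := β * ν₀ with ht₀def
  have ht₀ : t₀ = (β - 2) / (4 * β) := by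
    rw [ht₀def, hν₀def]; field_simp
  have ht₀pos : 0 < t₀ := by
    rw [ht₀]; exact div_pos (by linarith) (by positivity)
  have ht₀half : t₀ < 1 / 2 := by
    rw [ht₀, div_lt_div_iff₀ (by linarith) (by norm_num)]; nlinarith
  have h1t : (0:ℝ) < 1 - t₀ := by linarith
  -- Omega β ν₀ > ν₀
  have hlow : ν₀ < Omega β ν₀ := by
    rw [omega_eq β ν₀ hβ0, ← ht₀def]
    have hN := N_lower t₀ ht₀pos.le (by linarith)
    have hD := D_le' t₀ ht₀pos.le (by linarith)
    have hDpos := D_pos t₀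
    have hA : (0:ℝ) < Real.pi * t₀ - 2 * Real.pi * t₀ ^ 2 := by
      have h12 : (0:ℝ) < 1 - 2 * t₀ := by linarith
      nlinarith [mul_pos (mul_pos Real.pi_pos ht₀pos) h12]
    have hkey : 2 < β * ((1 - 2 * t₀) * (1 - t₀)) := by
      rw [ht₀]
      have hb : (0:ℝ) < 4 * β := by linarith
      rw [show (1 - 2 * ((β - 2) / (4 * β))) = (2 * β + 4) / (4 * β) by field_simp; ring,
          show (1 - (β - 2) / (4 * β)) = (3 * β + 2) / (4 * β) by field_simp; ring,
          div_mul_div_comm, ← mul_div_assoc, lt_div_iff₀ (by positivity)]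
      nlinarith [sq_nonneg (β - 2)]
    have key : ν₀ < (Real.pi * t₀ - 2 * Real.pi * t₀ ^ 2) / (2 * π / (1 - t₀)) := by
      rw [div_div_eq_mul_div]
      have hν : ν₀ = t₀ / β := by rw [ht₀def]; field_simp
      rw [hν, div_lt_div_iff₀ hβ0 (by positivity)]
      have hh := mul_lt_mul_of_pos_left hkey (mul_pos Real.pi_pos ht₀pos)
      nlinarith [hh]
    calc ν₀ < (Real.pi * t₀ - 2 * Real.pi * t₀ ^ 2) / (2 * π / (1 - t₀)) := key
      _ ≤ (Real.pi * t₀ - 2 * Real.pi * t₀ ^ 2) / Dfun t₀ := by gcongr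
      _ ≤ Nfun t₀ / Dfun t₀ := by gcongr
  -- Omega β 1 < 1
  have hhigh : Omega β 1 < 1 := by
    rw [omega_eq β 1 hβ0, div_lt_one (D_pos _)]
    have hsub : Dfun (β * 1) - Nfun (β * 1)
        = ∫ x in (0:ℝ)..(2 * Real.pi),
            Real.exp (β * 1 * Real.cos x) * (1 - Real.cos x) := by
      unfold Dfun Nfun
      rw [← intervalIntegral.integral_sub
        ((by fun_prop : Continuous fun x : ℝ => Real.exp (β * 1 * Real.cos x)).intervalIntegrable _ _)
        ((by fun_prop : Continuous fun x : ℝ =>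
          Real.exp (β * 1 * Real.cos x) * Real.cos x).intervalIntegrable _ _)]
      congr 1; ext x; ring
    have hpos : 0 < Dfun (β * 1) - Nfun (β * 1) := by
      rw [hsub]
      apply intervalIntegral.intervalIntegral_pos_of_pos_on
      · exact (by fun_prop : Continuous fun x : ℝ =>
          Real.exp (β * 1 * Real.cos x) * (1 - Real.cos x)).intervalIntegrable _ _
      · intro x hx
        have hcos : Real.cos x < 1 := by
          refine lt_of_le_of_ne (Real.cos_le_one x) fun h => ?_
          have := (Real.cos_eq_one_iff_of_lt_of_lt
            (by nlinarith [Real.pi_pos, hx.1, hx.2]) hx.2).mp h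
          exact ne_of_gt hx.1 this
        have := Real.exp_pos (β * 1 * Real.cos x)
        nlinarith
      · positivity
    linarith
  -- IVT
  have hν₀lt1 : ν₀ < 1 := by
    rw [hν₀def, div_lt_one (by positivity)]; nlinarith
  have hcont : ContinuousOn (fun ν => Omega β ν - ν) (Set.Icc ν₀ 1) := by
    have heq : ∀ ν : ℝ, Omega β ν - ν = Nfun (β * ν) / Dfun (β * ν) - ν := by
      intro ν; rw [omega_eq β ν hβ0]
    simp only [heq]
    apply Continuous.continuousOn
    exact ((cont_N.comp (by fun_prop)).div (cont_D.comp (by fun_prop))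
      (fun ν => (D_pos _).ne')).sub continuous_id
  have h0mem : (0:ℝ) ∈ Set.Icc (Omega β 1 - 1) (Omega β ν₀ - ν₀) :=
    ⟨by linarith, by linarith⟩
  obtain ⟨ν, hνmem, hν⟩ := intermediate_value_Icc' hν₀lt1.le hcont h0mem
  exact ⟨ν, lt_of_lt_of_le hν₀pos hνmem.1, by linarith [sub_eq_zero.mp hν]⟩
end

section
/- For all ξ ∈ ℝ, n ∈ ℤ, s ∈ ℝ, k ∈ {−1, 1}, λ ≥ 0 and p ∈ ℕ, with ⟨n,ξ⟩ = (1+n²+ξ²)^{1/2} and A^{λ,p}_n(ξ) = e^{λ⟨n,ξ⟩}⟨n,ξ⟩^p, one has A^{λ,p}_n(ξ)·|ξ − ns| ≤ C_p ( A^{λ,p+1}_{n−k}(ξ−ks)·A^{λ,1}_1(s) + A^{λ,1}_{n−k}(ξ−ks)·A^{λ,p+1}_1(s) ) for a constant C_p depending only on p. -/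
/-! `⟨n,ξ⟩` is the Euclidean norm of `(1, n, ξ) ∈ ℝ³`. The triangle inequality for `ℝ³` (after
raising the first coordinate from `1` to `2`) and Cauchy–Schwarz give
`⟨n,ξ⟩ ≤ ⟨n-k,ξ-ks⟩ + ⟨1,s⟩` and `|ξ - ns| ≤ ⟨n-k,ξ-ks⟩⟨1,s⟩`; the exponential factor of the
weight is then submultiplicative and the polynomial factor splits by `(a+b)^p ≤ 2^{p-1}(a^p+b^p)`. -/

open Real

/-- The Japanese bracket `⟨n,ξ⟩ = (1+n²+ξ²)^{1/2}`. -/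
noncomputable def brkt (n : ℤ) (ξ : ℝ) : ℝ := Real.sqrt (1 + (n : ℝ) ^ 2 + ξ ^ 2)

/-- The analytic weight `A^{λ,p}_n(ξ) = e^{λ⟨n,ξ⟩} ⟨n,ξ⟩^p`. -/
noncomputable def Awt (lam : ℝ) (p : ℕ) (n : ℤ) (ξ : ℝ) : ℝ :=
  Real.exp (lam * brkt n ξ) * (brkt n ξ) ^ p

lemma brkt_sq (n : ℤ) (ξ : ℝ) : brkt n ξ ^ 2 = 1 + (n : ℝ) ^ 2 + ξ ^ 2 :=
  Real.sq_sqrt (by positivity)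

lemma brkt_nonneg (n : ℤ) (ξ : ℝ) : 0 ≤ brkt n ξ :=
  Real.sqrt_nonneg _

lemma brkt_neg_neg (n : ℤ) (ξ : ℝ) : brkt (-n) (-ξ) = brkt n ξ := by
  simp only [brkt, Int.cast_neg, neg_sq]

lemma brkt_self_mul_of_eq_one_or_eq_neg_one {k : ℤ} (hk : k = 1 ∨ k = -1) (s : ℝ) :
    brkt k (k * s) = brkt 1 s := by
  rcases hk with rfl | rfl
  · simp
  · simpa using brkt_neg_neg 1 s

lemma one_add_mul_add_mul_le_brkt_mul_brkt (m m' : ℤ) (η η' : ℝ) :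
    1 + (m : ℝ) * m' + η * η' ≤ brkt m η * brkt m' η' := by
  rw [brkt, brkt, ← Real.sqrt_mul (by positivity)]
  refine (le_abs_self _).trans (Real.abs_le_sqrt ?_)
  nlinarith [sq_nonneg ((m : ℝ) - m'), sq_nonneg (η - η'), sq_nonneg ((m : ℝ) * η' - m' * η)]

lemma brkt_add_le (m m' : ℤ) (η η' : ℝ) :
    brkt (m + m') (η + η') ≤ brkt m η + brkt m' η' := by
  rw [brkt, Real.sqrt_le_left (add_nonneg (brkt_nonneg _ _) (brkt_nonneg _ _)),
    add_sq (brkt m η), brkt_sq, brkt_sq]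
  have := one_add_mul_add_mul_le_brkt_mul_brkt m m' η η'
  push_cast
  nlinarith

lemma abs_sub_mul_le_brkt_mul_brkt (m : ℤ) (η s : ℝ) :
    |η - m * s| ≤ brkt m η * brkt 1 s := by
  rw [brkt, brkt, ← Real.sqrt_mul (by positivity)]
  refine Real.abs_le_sqrt ?_
  push_cast
  nlinarith [sq_nonneg (η * s + m), sq_nonneg η, sq_nonneg (m : ℝ), sq_nonneg s]

lemma Awt_nonneg (lam : ℝ) (p : ℕ) (n : ℤ) (ξ : ℝ) : 0 ≤ Awt lam p n ξ :=
  mul_nonneg (exp_pos _).le (pow_nonneg (brkt_nonneg n ξ) p)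

lemma Awt_mul_brkt (lam : ℝ) (p : ℕ) (n : ℤ) (ξ : ℝ) :
    Awt lam p n ξ * brkt n ξ = Awt lam (p + 1) n ξ := by
  rw [Awt, Awt, pow_succ, mul_assoc]

lemma exp_mul_pow_le_of_le_add {lam a b c : ℝ} (hlam : 0 ≤ lam) (ha : 0 ≤ a) (hb : 0 ≤ b)
    (hc : 0 ≤ c) (hcab : c ≤ a + b) (p : ℕ) :
    exp (lam * c) * c ^ p
      ≤ 2 ^ (p - 1) * (exp (lam * a) * a ^ p * exp (lam * b)
        + exp (lam * a) * (exp (lam * b) * b ^ p)) := by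
  have hexp : exp (lam * c) ≤ exp (lam * a) * exp (lam * b) := by
    rw [← exp_add, ← mul_add]
    exact exp_le_exp.2 (mul_le_mul_of_nonneg_left hcab hlam)
  have hpow : c ^ p ≤ 2 ^ (p - 1) * (a ^ p + b ^ p) :=
    (pow_le_pow_left₀ hc hcab p).trans (add_pow_le ha hb p)
  calc exp (lam * c) * c ^ p
      ≤ exp (lam * a) * exp (lam * b) * (2 ^ (p - 1) * (a ^ p + b ^ p)) :=
        mul_le_mul hexp hpow (by positivity) (by positivity)
    _ = _ := by ring

lemma Awt_le_of_brkt_le_add {lam : ℝ} (hlam : 0 ≤ lam) {n m m' : ℤ} {ξ η η' : ℝ}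
    (h : brkt n ξ ≤ brkt m η + brkt m' η') (p : ℕ) :
    Awt lam p n ξ
      ≤ 2 ^ (p - 1) * (Awt lam p m η * Awt lam 0 m' η' + Awt lam 0 m η * Awt lam p m' η') := by
  simpa only [Awt, pow_zero, mul_one] using
    exp_mul_pow_le_of_le_add hlam (brkt_nonneg m η) (brkt_nonneg m' η') (brkt_nonneg n ξ) h p

/-- Splitting of the weight:
`A^{λ,p}_n(ξ)|ξ−ns| ≤ C_p (A^{λ,p+1}_{n−k}(ξ−ks) A^{λ,1}_1(s)
 + A^{λ,1}_{n−k}(ξ−ks) A^{λ,p+1}_1(s))` for `k = ±1`, with `C_p`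
depending only on `p`. -/
theorem stmt10 (p : ℕ) :
    ∃ C : ℝ, 0 < C ∧ ∀ (ξ s lam : ℝ) (n k : ℤ),
      (k = 1 ∨ k = -1) → 0 ≤ lam →
      Awt lam p n ξ * |ξ - (n : ℝ) * s|
        ≤ C * (Awt lam (p + 1) (n - k) (ξ - (k : ℝ) * s) * Awt lam 1 1 s
             + Awt lam 1 (n - k) (ξ - (k : ℝ) * s) * Awt lam (p + 1) 1 s) := by
  refine ⟨2 ^ (p - 1), by positivity, fun ξ s lam n k hk hlam => ?_⟩
  set a := brkt (n - k) (ξ - k * s)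
  set b := brkt 1 s
  have htri : brkt n ξ ≤ a + b := by
    simpa [brkt_self_mul_of_eq_one_or_eq_neg_one hk] using
      brkt_add_le (n - k) k (ξ - k * s) (k * s)
  have habs : |ξ - n * s| ≤ a * b := by
    simpa [sub_mul] using abs_sub_mul_le_brkt_mul_brkt (n - k) (ξ - k * s) s
  calc Awt lam p n ξ * |ξ - n * s|
      ≤ 2 ^ (p - 1) * (Awt lam p (n - k) (ξ - k * s) * Awt lam 0 1 s
          + Awt lam 0 (n - k) (ξ - k * s) * Awt lam p 1 s) * (a * b) :=
        mul_le_mul (Awt_le_of_brkt_le_add hlam htri p) habs (abs_nonneg _)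
          ((Awt_nonneg _ _ _ _).trans (Awt_le_of_brkt_le_add hlam htri p))
    _ = _ := by
        simp only [← Awt_mul_brkt lam _ (n - k), ← Awt_mul_brkt lam _ 1, a, b]
        ring
end
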